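/- Let V : L^p(∂ℝⁿ₊) → L^q(ℝⁿ₊) be a bounded sublinear operator with 1 < p < q < ∞ that is also bounded from the Lorentz space L^{p,q}(∂ℝⁿ₊) to L^q(ℝⁿ₊). Then for every f ∈ L^p(∂ℝⁿ₊), ‖V(f)‖_{L^q} ≤ C ‖f‖_{L^{p,∞}}^(1−p/q) ‖f‖_{L^p}^(p/q). -/

import Mathlib

open MeasureTheory
open scoped ENNReal

/-- The decreasing rearrangement `f*` of a function, as an `ℝ≥0∞`-valued function of `t > 0`. -/
noncomputable def decRearrangement {α : Type*} [MeasurableSpace α] (μ : Measure α)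
    (f : α → ℝ) (t : ℝ) : ℝ≥0∞ :=
  sInf {s : ℝ≥0∞ | μ {x | s < ENNReal.ofReal |f x|} ≤ ENNReal.ofReal t}

/-- The Lorentz quasi-norm `‖f‖_{L^{p,s}} = (∫₀^∞ (t^{1/p} f*(t))^s dt/t)^{1/s}`. -/
noncomputable def lorentzNorm {α : Type*} [MeasurableSpace α] (μ : Measure α)
    (f : α → ℝ) (p s : ℝ) : ℝ≥0∞ :=
  (∫⁻ t in Set.Ioi (0 : ℝ),
      (ENNReal.ofReal (t ^ (1 / p)) * decRearrangement μ f t) ^ s * ENNReal.ofReal (1 / t)) ^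
    (1 / s)

/-- The weak `L^p` (Lorentz `L^{p,∞}`) quasi-norm `sup_{t>0} t^{1/p} f*(t)`. -/
noncomputable def weakLorentzNorm {α : Type*} [MeasurableSpace α] (μ : Measure α)
    (f : α → ℝ) (p : ℝ) : ℝ≥0∞ :=
  ⨆ (t : ℝ) (_ : 0 < t), ENNReal.ofReal (t ^ (1 / p)) * decRearrangement μ f t

/-!
For `t > 0` the weak norm dominates `t^{1/p} f*(t)`, so the integrand of `‖f‖_{L^{p,q}}^q` satisfies
`(t^{1/p} f*(t))^q / t ≤ ‖f‖_{L^{p,∞}}^{q-p} f*(t)^p`. Since `f*` is dominated in distribution by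
`|f|`, the layer-cake formula gives `∫₀^∞ f*^p ≤ ‖f‖_p^p`. Taking `q`-th roots yields
`‖f‖_{L^{p,q}} ≤ ‖f‖_{L^{p,∞}}^{1-p/q} ‖f‖_p^{p/q}`, and the boundedness of `V` on `L^{p,q}` does
the rest.
-/

open Set Filter Topology

section Lorentz

variable {α : Type*} [MeasurableSpace α] {μ : Measure α} {f : α → ℝ} {p q : ℝ}

lemma decRearrangement_le_of_measure_le {s : ℝ≥0∞} {t : ℝ}
    (h : μ {x | s < ENNReal.ofReal |f x|} ≤ ENNReal.ofReal t) :
    decRearrangement μ f t ≤ s :=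
  sInf_le h

lemma ofReal_lt_measure_of_lt_decRearrangement {s : ℝ≥0∞} {t : ℝ}
    (h : s < decRearrangement μ f t) :
    ENNReal.ofReal t < μ {x | s < ENNReal.ofReal |f x|} :=
  not_le.mp fun h' => (decRearrangement_le_of_measure_le h').not_gt h

lemma decRearrangement_antitone (μ : Measure α) (f : α → ℝ) :
    Antitone (decRearrangement μ f) := fun _ _ hst =>
  sInf_le_sInf fun _ hs => hs.trans (ENNReal.ofReal_le_ofReal hst)

lemma volume_lt_decRearrangement_le (s : ℝ≥0∞) :
    volume ({t | s < decRearrangement μ f t} ∩ Ioi 0) ≤ μ {x | s < ENNReal.ofReal |f x|} := by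
  set D := μ {x | s < ENNReal.ofReal |f x|}
  rcases eq_or_ne D ⊤ with hD | hD
  · exact hD ▸ le_top
  calc volume ({t | s < decRearrangement μ f t} ∩ Ioi 0)
      ≤ volume (Ioc 0 D.toReal) := measure_mono fun t ⟨hst, ht⟩ =>
        ⟨ht, ((ENNReal.ofReal_lt_iff_lt_toReal (le_of_lt ht) hD).mp
          (ofReal_lt_measure_of_lt_decRearrangement hst)).le⟩
    _ = D := by rw [Real.volume_Ioc, sub_zero, ENNReal.ofReal_toReal hD]

lemma decRearrangement_ne_top (hp : 0 < p) (hf : MemLp f (ENNReal.ofReal p) μ) {t : ℝ}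
    (ht : 0 < t) : decRearrangement μ f t ≠ ⊤ := by
  set L := eLpNorm f (ENNReal.ofReal p) μ
  have hchebyshev (n : ℕ) (hn : n ≠ 0) :
      μ {x | (n : ℝ≥0∞) < ENNReal.ofReal |f x|} ≤ (n : ℝ≥0∞)⁻¹ ^ p * L ^ p := by
    have h := meas_ge_le_mul_pow_eLpNorm_enorm μ (ENNReal.ofReal_pos.mpr hp).ne'
      ENNReal.ofReal_ne_top hf.1 (ε := n) (by simpa using hn) (by simp)
    rw [ENNReal.toReal_ofReal hp.le] at h
    refine (measure_mono fun x hx => ?_).trans h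
    simp only [mem_ofPred_eq, ← Real.norm_eq_abs, ofReal_norm] at hx ⊢
    exact hx.le
  have hlim : Tendsto (fun n : ℕ => (n : ℝ≥0∞)⁻¹ ^ p * L ^ p) atTop (𝓝 0) := by
    simpa [ENNReal.zero_rpow_of_pos hp] using
      ENNReal.Tendsto.mul_const (ENNReal.tendsto_inv_nat_nhds_zero.ennrpow_const p)
        (Or.inr (ENNReal.rpow_ne_top_of_nonneg hp.le hf.2.ne))
  obtain ⟨n, hn, hn0⟩ := (((tendsto_order.1 hlim).2 _ (ENNReal.ofReal_pos.mpr ht)).and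
    (eventually_ne_atTop 0)).exists
  exact ne_top_of_le_ne_top (ENNReal.natCast_ne_top n)
    (decRearrangement_le_of_measure_le ((hchebyshev n hn0).trans hn.le))

lemma lintegral_decRearrangement_rpow_le (hp : 0 < p) (hf : MemLp f (ENNReal.ofReal p) μ) :
    ∫⁻ t in Ioi 0, decRearrangement μ f t ^ p ≤ eLpNorm f (ENNReal.ofReal p) μ ^ p := by
  set g : ℝ → ℝ := fun t => (decRearrangement μ f t).toReal
  have hg : Measurable g :=
    ENNReal.measurable_toReal.comp (decRearrangement_antitone μ f).measurable
  have hLHS : ∫⁻ t in Ioi 0, decRearrangement μ f t ^ p =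
      ∫⁻ t in Ioi 0, ENNReal.ofReal (g t ^ p) :=
    setLIntegral_congr_fun measurableSet_Ioi fun t ht => by
      rw [← ENNReal.ofReal_rpow_of_nonneg ENNReal.toReal_nonneg hp.le,
        ENNReal.ofReal_toReal (decRearrangement_ne_top hp hf ht)]
  have hRHS : eLpNorm f (ENNReal.ofReal p) μ ^ p = ∫⁻ x, ENNReal.ofReal (|f x| ^ p) ∂μ := by
    rw [eLpNorm_eq_eLpNorm' (ENNReal.ofReal_pos.mpr hp).ne' ENNReal.ofReal_ne_top,
      ENNReal.toReal_ofReal hp.le, ← lintegral_rpow_enorm_eq_rpow_eLpNorm' hp]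
    congr 1
    funext x
    rw [← Real.norm_eq_abs, ← ENNReal.ofReal_rpow_of_nonneg (norm_nonneg _) hp.le, ofReal_norm]
  have hdist (s : ℝ) (hs : s ∈ Ioi 0) :
      volume.restrict (Ioi 0) {t | s < g t} ≤ μ {x | s < |f x|} := by
    rw [Measure.restrict_apply' measurableSet_Ioi]
    calc volume ({t | s < g t} ∩ Ioi 0)
        ≤ volume ({t | ENNReal.ofReal s < decRearrangement μ f t} ∩ Ioi 0) :=
          measure_mono fun t ⟨hst, ht⟩ => ⟨((ENNReal.ofReal_lt_ofReal_iff_of_nonneg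
            (le_of_lt hs)).mpr hst).trans_le ENNReal.ofReal_toReal_le, ht⟩
      _ ≤ μ {x | ENNReal.ofReal s < ENNReal.ofReal |f x|} := volume_lt_decRearrangement_le _
      _ = μ {x | s < |f x|} := by
          simp only [ENNReal.ofReal_lt_ofReal_iff_of_nonneg (le_of_lt hs)]
  calc ∫⁻ t in Ioi 0, decRearrangement μ f t ^ p
      = ENNReal.ofReal p * ∫⁻ s in Ioi 0,
          volume.restrict (Ioi 0) {t | s < g t} * ENNReal.ofReal (s ^ (p - 1)) := by
        rw [hLHS, lintegral_rpow_eq_lintegral_meas_lt_mul _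
          (ae_of_all _ fun _ => ENNReal.toReal_nonneg) hg.aemeasurable hp]
    _ ≤ ENNReal.ofReal p * ∫⁻ s in Ioi 0, μ {x | s < |f x|} * ENNReal.ofReal (s ^ (p - 1)) :=
        mul_le_mul_right (setLIntegral_mono' measurableSet_Ioi fun s hs =>
          mul_le_mul_left (hdist s hs) _) _
    _ = eLpNorm f (ENNReal.ofReal p) μ ^ p := by
        rw [hRHS, lintegral_rpow_eq_lintegral_meas_lt_mul _ (ae_of_all _ fun _ => abs_nonneg _)
          hf.aemeasurable.abs hp]

lemma lintegral_lorentzNorm_integrand_le (hp : 0 < p) (hpq : p ≤ q) :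
    ∫⁻ t in Ioi 0,
        (ENNReal.ofReal (t ^ (1 / p)) * decRearrangement μ f t) ^ q * ENNReal.ofReal (1 / t) ≤
      weakLorentzNorm μ f p ^ (q - p) * ∫⁻ t in Ioi 0, decRearrangement μ f t ^ p := by
  rw [← lintegral_const_mul _ ((decRearrangement_antitone μ f).measurable.pow_const p)]
  refine setLIntegral_mono' measurableSet_Ioi fun t ht => ?_
  set A := ENNReal.ofReal (t ^ (1 / p)) * decRearrangement μ f t
  have hAW : A ≤ weakLorentzNorm μ f p :=
    le_iSup₂ (f := fun (t : ℝ) (_ : 0 < t) =>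
      ENNReal.ofReal (t ^ (1 / p)) * decRearrangement μ f t) t ht
  have hAp : A ^ p * ENNReal.ofReal (1 / t) = decRearrangement μ f t ^ p := by
    rw [ENNReal.mul_rpow_of_nonneg _ _ hp.le,
      ENNReal.ofReal_rpow_of_nonneg (Real.rpow_nonneg (le_of_lt ht) _) hp.le,
      ← Real.rpow_mul (le_of_lt ht), one_div_mul_cancel hp.ne', Real.rpow_one,
      mul_right_comm, ← ENNReal.ofReal_mul (le_of_lt ht), mul_one_div_cancel (ne_of_gt ht),
      ENNReal.ofReal_one, one_mul]
  calc A ^ q * ENNReal.ofReal (1 / t)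
      = A ^ (q - p) * (A ^ p * ENNReal.ofReal (1 / t)) := by
        rw [← mul_assoc, ← ENNReal.rpow_add_of_nonneg _ _ (sub_nonneg.mpr hpq) hp.le,
          sub_add_cancel]
    _ ≤ weakLorentzNorm μ f p ^ (q - p) * decRearrangement μ f t ^ p := by
        rw [hAp]
        gcongr

theorem lorentzNorm_le_weakLorentzNorm_rpow_mul_eLpNorm_rpow (hp : 0 < p) (hpq : p ≤ q)
    (hf : MemLp f (ENNReal.ofReal p) μ) :
    lorentzNorm μ f p q ≤
      weakLorentzNorm μ f p ^ (1 - p / q) * eLpNorm f (ENNReal.ofReal p) μ ^ (p / q) := by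
  have hq : 0 < q := hp.trans_le hpq
  calc lorentzNorm μ f p q
      ≤ (weakLorentzNorm μ f p ^ (q - p) * eLpNorm f (ENNReal.ofReal p) μ ^ p) ^ (1 / q) := by
        refine ENNReal.rpow_le_rpow ((lintegral_lorentzNorm_integrand_le hp hpq).trans ?_)
          (by positivity)
        gcongr
        exact lintegral_decRearrangement_rpow_le hp hf
    _ = weakLorentzNorm μ f p ^ (1 - p / q) * eLpNorm f (ENNReal.ofReal p) μ ^ (p / q) := by
        rw [ENNReal.mul_rpow_of_nonneg _ _ (by positivity), ← ENNReal.rpow_mul,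
          ← ENNReal.rpow_mul]
        congr 2 <;> field_simp

end Lorentz

theorem stmt8_general {α β : Type*} [MeasurableSpace α] [MeasurableSpace β]
    (μ : Measure α) (ν : Measure β) (p q : ℝ) (hp : 1 < p) (hpq : p < q)
    (V : (α → ℝ) → (β → ℝ))
    (C₁ : ℝ≥0∞) (hC₁ : C₁ < ⊤)
    (hlor : ∀ f : α → ℝ,
      eLpNorm (V f) (ENNReal.ofReal q) ν ≤ C₁ * lorentzNorm μ f p q) :
    ∃ C : ℝ≥0∞, C < ⊤ ∧
      ∀ f : α → ℝ, MemLp f (ENNReal.ofReal p) μ →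
        eLpNorm (V f) (ENNReal.ofReal q) ν ≤
          C * weakLorentzNorm μ f p ^ (1 - p / q) *
            eLpNorm f (ENNReal.ofReal p) μ ^ (p / q) := by
  refine ⟨C₁, hC₁, fun f hf => (hlor f).trans ?_⟩
  rw [mul_assoc]
  gcongr
  exact lorentzNorm_le_weakLorentzNorm_rpow_mul_eLpNorm_rpow (zero_lt_one.trans hp) hpq.le hf

theorem stmt8 {α β : Type*} [MeasurableSpace α] [MeasurableSpace β]
    (μ : Measure α) (ν : Measure β) (p q : ℝ) (hp : 1 < p) (hpq : p < q)
    (V : (α → ℝ) → (β → ℝ))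
    (hsub : ∀ f g x, |V (f + g) x| ≤ |V f x| + |V g x|)
    (C₀ C₁ : ℝ≥0∞) (hC₀ : C₀ < ⊤) (hC₁ : C₁ < ⊤)
    (hbdd : ∀ f : α → ℝ,
      eLpNorm (V f) (ENNReal.ofReal q) ν ≤ C₀ * eLpNorm f (ENNReal.ofReal p) μ)
    (hlor : ∀ f : α → ℝ,
      eLpNorm (V f) (ENNReal.ofReal q) ν ≤ C₁ * lorentzNorm μ f p q) :
    ∃ C : ℝ≥0∞, C < ⊤ ∧
      ∀ f : α → ℝ, MemLp f (ENNReal.ofReal p) μ →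
        eLpNorm (V f) (ENNReal.ofReal q) ν ≤
          C * weakLorentzNorm μ f p ^ (1 - p / q) *
            eLpNorm f (ENNReal.ofReal p) μ ^ (p / q) :=
  stmt8_general μ ν p q hp hpq V C₁ hC₁ hlor
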